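/- In the general weighted Hilbert–Schmidt Lie algebra, the sectional curvature satisfies, for all i, j, k, m: K(ξ_{ij}, ξ_{km}) = (1/4)(6δ_{ik}δ_{im}δ_{jk}δ_{jm}λ_i⁴ + 2δ_{ik}δ_{jm}λ_i⁴ + 2δ_{ik}δ_{jm}λ_j⁴ − 2δ_{ik}δ_{im}δ_{km}λ_i⁴ + δ_{im}λ_i⁴ − 2δ_{ij}δ_{im}λ_i⁴ − 4δ_{ik}λ_i⁴ + δ_{ik}λ_j⁴ + δ_{ik}λ_m⁴ − 2δ_{ij}δ_{ik}λ_i⁴ − 2δ_{jk}δ_{jm}δ_{mk}λ_j⁴ + δ_{jm}λ_i⁴ + δ_{jm}λ_k⁴ − 4δ_{jm}λ_j⁴ + δ_{jk}λ_j⁴). -/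
import Mathlib


noncomputable section

open Filter
open scoped RealInnerProductSpace

variable {gi : Type*} [NormedAddCommGroup gi] [InnerProductSpace ℝ gi]

/-- Kronecker delta. -/
def kdel (a b : ℕ) : ℝ := if a = b then 1 else 0

lemma kdel_comm (a b : ℕ) : kdel a b = kdel b a := by simp [kdel, eq_comm]

lemma kdel_self (a : ℕ) : kdel a a = 1 := by simp [kdel]

lemma kdel_of_ne {a b : ℕ} (h : a ≠ b) : kdel a b = 0 := by simp [kdel, h]

/-- The Riemannian curvature tensor
`R_{x y} w = ∇_{[x,y]} w − ∇_x ∇_y w + ∇_y ∇_x w` built from a Levi-Civita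
connection `nab` and a Lie bracket `br`. -/
def Rc (nab br : gi →ₗ[ℝ] gi →ₗ[ℝ] gi) (x y w : gi) : gi :=
  nab (br x y) w - nab x (nab y w) + nab y (nab x w)

/-- The sectional curvature `K(x,y) = ⟪R_{x y} x, y⟫`. -/
def Ksec (nab br : gi →ₗ[ℝ] gi →ₗ[ℝ] gi) (x y : gi) : ℝ :=
  ⟪Rc nab br x y x, y⟫

/-- The truncated Ricci curvature `R^N(ξ_{ij}) = Σ_{k,m=1}^N K(ξ_{ij}, ξ_{km})`. -/
def RicN (nab br : gi →ₗ[ℝ] gi →ₗ[ℝ] gi) (ξ : ℕ → ℕ → gi) (N i j : ℕ) : ℝ :=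
  ∑ k ∈ Finset.Icc 1 N, ∑ m ∈ Finset.Icc 1 N, Ksec nab br (ξ i j) (ξ k m)

/-- The truncated self-adjoint Ricci curvature
`R̂^N(x) = Σ_{i,j=1}^N R_{ξ_{ij} x}(ξ_{ij})`. -/
def RicHat (nab br : gi →ₗ[ℝ] gi →ₗ[ℝ] gi) (ξ : ℕ → ℕ → gi) (N : ℕ) (x : gi) : gi :=
  ∑ i ∈ Finset.Icc 1 N, ∑ j ∈ Finset.Icc 1 N, Rc nab br (ξ i j) x (ξ i j)

/-- In the general weighted Hilbert-Schmidt Lie algebra, the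
sectional curvature of basis elements is given by the stated explicit formula. -/
theorem stmt15 {gi : Type*} [NormedAddCommGroup gi] [InnerProductSpace ℝ gi]
    (lam : ℕ → ℝ) (hpos : ∀ i, 0 < lam i) (c : ℝ) (hbdd : ∀ i, lam i ≤ c)
    (ξ : ℕ → ℕ → gi) (honb : Orthonormal ℝ (fun p : ℕ × ℕ => ξ p.1 p.2))
    (htot : Dense ((Submodule.span ℝ (Set.range fun p : ℕ × ℕ => ξ p.1 p.2) :
      Submodule ℝ gi) : Set gi))
    (br nab : gi →ₗ[ℝ] gi →ₗ[ℝ] gi)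
    (hbr : ∀ i j k m : ℕ, br (ξ i j) (ξ k m) =
      (if j = k then (lam j) ^ 2 else 0) • ξ i m -
        (if i = m then (lam i) ^ 2 else 0) • ξ k j)
    (hnab : ∀ x y z : gi,
      ⟪nab x y, z⟫ = (1 / 2) * (⟪br x y, z⟫ - ⟪br y z, x⟫ + ⟪br z x, y⟫))
    (i j k m : ℕ) :
    Ksec nab br (ξ i j) (ξ k m) =
      (1 / 4) * (6 * kdel i k * kdel i m * kdel j k * kdel j m * (lam i) ^ 4 +
        2 * kdel i k * kdel j m * (lam i) ^ 4 +
        2 * kdel i k * kdel j m * (lam j) ^ 4 -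
        2 * kdel i k * kdel i m * kdel k m * (lam i) ^ 4 +
        kdel i m * (lam i) ^ 4 -
        2 * kdel i j * kdel i m * (lam i) ^ 4 -
        4 * kdel i k * (lam i) ^ 4 +
        kdel i k * (lam j) ^ 4 +
        kdel i k * (lam m) ^ 4 -
        2 * kdel i j * kdel i k * (lam i) ^ 4 -
        2 * kdel j k * kdel j m * kdel m k * (lam j) ^ 4 +
        kdel j m * (lam i) ^ 4 +
        kdel j m * (lam k) ^ 4 -
        4 * kdel j m * (lam j) ^ 4 +
        kdel j k * (lam j) ^ 4) := by
  have hxi : ∀ a b p q : ℕ, (⟪ξ a b, ξ p q⟫ : ℝ) = kdel a p * kdel b q := by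
    intro a b p q
    have h := orthonormal_iff_ite.mp honb (a, b) (p, q)
    rw [h]
    by_cases h1 : a = p <;> by_cases h2 : b = q <;>
      simp [kdel, Prod.ext_iff, h1, h2]
  have hbr' : ∀ a b c d : ℕ, br (ξ a b) (ξ c d) =
      (kdel b c * lam b ^ 2) • ξ a d - (kdel a d * lam a ^ 2) • ξ c b := by
    intro a b c d
    rw [hbr]
    simp [kdel, ite_mul]
  have hnabv : ∀ a b c d : ℕ, nab (ξ a b) (ξ c d) =
      (2⁻¹ * (kdel b c * lam b ^ 2)) • ξ a d
      - (2⁻¹ * (kdel a d * lam a ^ 2)) • ξ c b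
      - (2⁻¹ * (kdel a c * lam d ^ 2)) • ξ d b
      + (2⁻¹ * (kdel b d * lam c ^ 2)) • ξ a c
      + (2⁻¹ * (kdel b d * lam a ^ 2)) • ξ c a
      - (2⁻¹ * (kdel a c * lam b ^ 2)) • ξ b d := by
    intro a b c d
    set V : gi := (2⁻¹ * (kdel b c * lam b ^ 2)) • ξ a d
      - (2⁻¹ * (kdel a d * lam a ^ 2)) • ξ c b
      - (2⁻¹ * (kdel a c * lam d ^ 2)) • ξ d b
      + (2⁻¹ * (kdel b d * lam c ^ 2)) • ξ a c
      + (2⁻¹ * (kdel b d * lam a ^ 2)) • ξ c a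
      - (2⁻¹ * (kdel a c * lam b ^ 2)) • ξ b d with hVdef
    have key : ∀ p q : ℕ, (⟪nab (ξ a b) (ξ c d) - V, ξ p q⟫ : ℝ) = 0 := by
      intro p q
      rw [inner_sub_left, hnab, hVdef]
      rw [hbr' a b c d, hbr' c d p q, hbr' p q a b]
      simp only [inner_sub_left, inner_sub_right, inner_add_left, inner_add_right,
        real_inner_smul_left, real_inner_smul_right, hxi]
      rcases eq_or_ne q a with rfl | hqa
      · rcases eq_or_ne p b with rfl | hpb
        · simp only [kdel_self, kdel_comm]; ring
        · simp only [kdel_self, kdel_of_ne hpb, kdel_of_ne hpb.symm, kdel_comm]; ring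
      · rcases eq_or_ne p b with rfl | hpb
        · simp only [kdel_self, kdel_of_ne hqa, kdel_of_ne hqa.symm, kdel_comm]; ring
        · simp only [kdel_self, kdel_of_ne hqa, kdel_of_ne hqa.symm,
            kdel_of_ne hpb, kdel_of_ne hpb.symm, kdel_comm]; ring
    have hz : ∀ z ∈ Submodule.span ℝ (Set.range fun p : ℕ × ℕ => ξ p.1 p.2),
        (⟪nab (ξ a b) (ξ c d) - V, z⟫ : ℝ) = 0 := by
      intro z hzm
      induction hzm using Submodule.span_induction with
      | mem x hx => obtain ⟨⟨p, q⟩, rfl⟩ := hx; exact key p q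
      | zero => simp
      | add x y _ _ hx hy => rw [inner_add_right, hx, hy]; ring
      | smul r x _ hx => rw [real_inner_smul_right, hx]; ring
    have hcont : Continuous fun z : gi => (⟪nab (ξ a b) (ξ c d) - V, z⟫ : ℝ) :=
      Continuous.inner continuous_const continuous_id
    have hfun := Continuous.ext_on htot hcont continuous_const
      (fun z hzs => hz z hzs)
    have hww : (⟪nab (ξ a b) (ξ c d) - V, nab (ξ a b) (ξ c d) - V⟫ : ℝ) = 0 :=
      congrFun hfun _
    have hw0 : nab (ξ a b) (ξ c d) - V = 0 := by
      rwa [inner_self_eq_zero] at hww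
    exact sub_eq_zero.mp hw0
  clear hbr hnab htot honb hpos hbdd
  simp only [Ksec, Rc, hbr' i j k m, map_sub, map_add, map_smul,
    LinearMap.sub_apply, LinearMap.add_apply, LinearMap.smul_apply, hnabv,
    smul_sub, smul_add, smul_smul, inner_sub_left, inner_add_left,
    real_inner_smul_left, hxi]
  clear hxi hbr' hnabv
  by_cases hik : i = k <;> by_cases him : i = m <;> by_cases hij : i = j <;>
    by_cases hjk : j = k <;> by_cases hjm : j = m <;> by_cases hkm : k = m <;>
    subst_vars <;> simp_all [kdel, eq_comm] <;> ring
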